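/- Decomposition and recomposition of grounding trees: for every grounding tree t of size greater than 1, (a) every element of the list of immediate grounding claims of t is derivable from the hypothesis set {t} using only the hypothesis rule and the ▷-elimination rules (i.e., TDerElim {t} u holds for every immediate grounding claim u of t), and (b) t is derivable from the set of immediate grounding claims of t using only the hypothesis rule and the ▷-introduction rules (i.e., TDerIntro (set of immediate grounding claims of t) t holds). -/

import Mathlib

inductive GTree (α : Type*) : Type _ where
  | mk (grounds : List (α ⊕ GTree α)) (conds : List (α ⊕ GTree α)) (concl : α)

namespace GTree
variable {α : Type*}

def concl : GTree α → α
  | .mk _ _ b => b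

end GTree

/-- Derivability of grounding trees from a set `H` of hypotheses using only the
hypothesis rule and the ▷-elimination rules. -/
inductive TDerElim {α : Type*} (H : Set (GTree α)) : GTree α → Prop where
  | hyp {t : GTree α} : t ∈ H → TDerElim H t
  | elimExtG {s : GTree α} {Γ₁ Γ₂ Ξ : List (α ⊕ GTree α)} {B : α} :
      TDerElim H (.mk (Γ₁ ++ [Sum.inr s] ++ Γ₂) Ξ B) → TDerElim H s
  | elimExtC {s : GTree α} {Γ Ξ₁ Ξ₂ : List (α ⊕ GTree α)} {B : α} :
      TDerElim H (.mk Γ (Ξ₁ ++ [Sum.inr s] ++ Ξ₂) B) → TDerElim H s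
  | elimRepG {s : GTree α} {Γ₁ Γ₂ Ξ : List (α ⊕ GTree α)} {B : α} :
      TDerElim H (.mk (Γ₁ ++ [Sum.inr s] ++ Γ₂) Ξ B) →
      TDerElim H (.mk (Γ₁ ++ [Sum.inl s.concl] ++ Γ₂) Ξ B)
  | elimRepC {s : GTree α} {Γ Ξ₁ Ξ₂ : List (α ⊕ GTree α)} {B : α} :
      TDerElim H (.mk Γ (Ξ₁ ++ [Sum.inr s] ++ Ξ₂) B) →
      TDerElim H (.mk Γ (Ξ₁ ++ [Sum.inl s.concl] ++ Ξ₂) B)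

/-- Derivability of grounding trees from a set `H` of hypotheses using only the
hypothesis rule and the ▷-introduction rules. -/
inductive TDerIntro {α : Type*} (H : Set (GTree α)) : GTree α → Prop where
  | hyp {t : GTree α} : t ∈ H → TDerIntro H t
  | introG {s : GTree α} {Γ₁ Γ₂ Ξ : List (α ⊕ GTree α)} {B : α} :
      TDerIntro H s → TDerIntro H (.mk (Γ₁ ++ [Sum.inl s.concl] ++ Γ₂) Ξ B) →
      TDerIntro H (.mk (Γ₁ ++ [Sum.inr s] ++ Γ₂) Ξ B)
  | introC {s : GTree α} {Γ Ξ₁ Ξ₂ : List (α ⊕ GTree α)} {B : α} :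
      TDerIntro H s → TDerIntro H (.mk Γ (Ξ₁ ++ [Sum.inl s.concl] ++ Ξ₂) B) →
      TDerIntro H (.mk Γ (Ξ₁ ++ [Sum.inr s] ++ Ξ₂) B)

namespace GTree
variable {α : Type*}

/-- The conclusion of an entry of a grounding tree. -/
def econcl : α ⊕ GTree α → α
  | .inl a => a
  | .inr s => s.concl

/-- The flattening of a grounding tree: the immediate grounding claim it expresses. -/
def flatten : GTree α → GTree α
  | .mk G C B => .mk (G.map (Sum.inl ∘ econcl)) (C.map (Sum.inl ∘ econcl)) B

mutual
/-- The list of immediate grounding claims of a grounding tree: its flattening followed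
by the immediate grounding claims of all its subtree entries. -/
def claims : GTree α → List (GTree α)
  | .mk G C B => flatten (.mk G C B) :: (claimsList G ++ claimsList C)

def claimsList : List (α ⊕ GTree α) → List (GTree α)
  | [] => []
  | .inl _ :: es => claimsList es
  | .inr s :: es => claims s ++ claimsList es
end

mutual
/-- The size of a grounding tree: 1 plus the sum of the sizes of its subtree entries. -/
def size : GTree α → ℕ
  | .mk G C _ => 1 + sizeList G + sizeList C

def sizeList : List (α ⊕ GTree α) → ℕ
  | [] => 0
  | .inl _ :: es => sizeList es
  | .inr s :: es => size s + sizeList es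
end

end GTree

namespace GTreeAux
open GTree
variable {α : Type*}

lemma size_le_of_mem : ∀ (es : List (α ⊕ GTree α)) (s : GTree α),
    Sum.inr s ∈ es → s.size ≤ sizeList es := by
  intro es
  induction es with
  | nil => intro s h; simp at h
  | cons e es ih =>
    intro s h
    rcases List.mem_cons.mp h with h' | h'
    · rw [← h']; simp [sizeList]
    · have := ih s h'
      cases e <;> simp [sizeList] <;> omega

lemma one_le_size (t : GTree α) : 1 ≤ t.size := by
  cases t with | mk G C B => simp [size]; omega

lemma claims_subset_claimsList : ∀ (es : List (α ⊕ GTree α)) (s : GTree α),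
    Sum.inr s ∈ es → ∀ u ∈ s.claims, u ∈ claimsList es := by
  intro es
  induction es with
  | nil => intro s h; simp at h
  | cons e es ih =>
    intro s h u hu
    rcases List.mem_cons.mp h with h' | h'
    · rw [← h']; simp [claimsList]; left; exact hu
    · cases e with
      | inl a => simpa [claimsList] using ih s h' u hu
      | inr w => simp [claimsList]; right; exact ih s h' u hu

lemma mem_claimsList : ∀ (es : List (α ⊕ GTree α)) (u : GTree α),
    u ∈ claimsList es → ∃ s, Sum.inr s ∈ es ∧ u ∈ s.claims := by
  intro es
  induction es with
  | nil => intro u h; simp [claimsList] at h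
  | cons e es ih =>
    intro u h
    cases e with
    | inl a =>
      obtain ⟨s, hs, hu⟩ := ih u (by simpa [claimsList] using h)
      exact ⟨s, List.mem_cons_of_mem _ hs, hu⟩
    | inr w =>
      simp only [claimsList, List.mem_append] at h
      rcases h with h | h
      · exact ⟨w, List.mem_cons_self, h⟩
      · obtain ⟨s, hs, hu⟩ := ih u h
        exact ⟨s, List.mem_cons_of_mem _ hs, hu⟩

lemma elim_flatten_G {H : Set (GTree α)} {Ξ : List (α ⊕ GTree α)} {B : α} :
    ∀ (G₂ Γ₁ : List (α ⊕ GTree α)),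
      TDerElim H (.mk (Γ₁ ++ G₂) Ξ B) →
      TDerElim H (.mk (Γ₁ ++ G₂.map (Sum.inl ∘ econcl)) Ξ B) := by
  intro G₂
  induction G₂ with
  | nil => intro Γ₁ h; simpa using h
  | cons e es ih =>
    intro Γ₁ h
    cases e with
    | inl a =>
      have := ih (Γ₁ ++ [Sum.inl a]) (by simpa using h)
      simpa [econcl] using this
    | inr s =>
      have h1 : TDerElim H (.mk (Γ₁ ++ [Sum.inl s.concl] ++ es) Ξ B) :=
        TDerElim.elimRepG (show TDerElim H (.mk (Γ₁ ++ [Sum.inr s] ++ es) Ξ B) by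
          simpa using h)
      have := ih (Γ₁ ++ [Sum.inl s.concl]) (by simpa using h1)
      simpa [econcl] using this

lemma elim_flatten_C {H : Set (GTree α)} {Γ : List (α ⊕ GTree α)} {B : α} :
    ∀ (C₂ Ξ₁ : List (α ⊕ GTree α)),
      TDerElim H (.mk Γ (Ξ₁ ++ C₂) B) →
      TDerElim H (.mk Γ (Ξ₁ ++ C₂.map (Sum.inl ∘ econcl)) B) := by
  intro C₂
  induction C₂ with
  | nil => intro Ξ₁ h; simpa using h
  | cons e es ih =>
    intro Ξ₁ h
    cases e with
    | inl a =>
      have := ih (Ξ₁ ++ [Sum.inl a]) (by simpa using h)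
      simpa [econcl] using this
    | inr s =>
      have h1 : TDerElim H (.mk Γ (Ξ₁ ++ [Sum.inl s.concl] ++ es) B) :=
        TDerElim.elimRepC (show TDerElim H (.mk Γ (Ξ₁ ++ [Sum.inr s] ++ es) B) by
          simpa using h)
      have := ih (Ξ₁ ++ [Sum.inl s.concl]) (by simpa using h1)
      simpa [econcl] using this

lemma elim_sub_G {H : Set (GTree α)} {G Ξ : List (α ⊕ GTree α)} {B : α} {s : GTree α}
    (hs : Sum.inr s ∈ G) (h : TDerElim H (.mk G Ξ B)) : TDerElim H s := by
  obtain ⟨l₁, l₂, rfl⟩ := List.append_of_mem hs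
  exact TDerElim.elimExtG (show TDerElim H (.mk (l₁ ++ [Sum.inr s] ++ l₂) Ξ B) by
    simpa using h)

lemma elim_sub_C {H : Set (GTree α)} {G Ξ : List (α ⊕ GTree α)} {B : α} {s : GTree α}
    (hs : Sum.inr s ∈ Ξ) (h : TDerElim H (.mk G Ξ B)) : TDerElim H s := by
  obtain ⟨l₁, l₂, rfl⟩ := List.append_of_mem hs
  exact TDerElim.elimExtC (show TDerElim H (.mk G (l₁ ++ [Sum.inr s] ++ l₂) B) by
    simpa using h)

lemma elim_claims {H : Set (GTree α)} :
    ∀ (n : ℕ) (t : GTree α), t.size ≤ n → TDerElim H t → ∀ u ∈ t.claims, TDerElim H u := by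
  intro n
  induction n with
  | zero => intro t hsz; have := one_le_size t; omega
  | succ n ih =>
    rintro ⟨G, C, B⟩ hsz h u hu
    simp only [claims, List.mem_cons, List.mem_append] at hu
    rcases hu with rfl | hu | hu
    · have h1 := elim_flatten_G G [] (by simpa using h)
      have h2 := elim_flatten_C (H := H) C [] (by simpa using h1)
      simpa [flatten] using h2
    · obtain ⟨s, hs, hus⟩ := mem_claimsList G u hu
      have hsd : TDerElim H s := elim_sub_G hs h
      have hlt : s.size ≤ n := by
        have h1 := size_le_of_mem G s hs
        simp only [size] at hsz; omega
      exact ih s hlt hsd u hus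
    · obtain ⟨s, hs, hus⟩ := mem_claimsList C u hu
      have hsd : TDerElim H s := elim_sub_C hs h
      have hlt : s.size ≤ n := by
        have h1 := size_le_of_mem C s hs
        simp only [size] at hsz; omega
      exact ih s hlt hsd u hus

lemma intro_unflatten_G {H : Set (GTree α)} {Ξ : List (α ⊕ GTree α)} {B : α} :
    ∀ (G₂ Γ₁ : List (α ⊕ GTree α)),
      (∀ s : GTree α, Sum.inr s ∈ G₂ → TDerIntro H s) →
      TDerIntro H (.mk (Γ₁ ++ G₂.map (Sum.inl ∘ econcl)) Ξ B) →
      TDerIntro H (.mk (Γ₁ ++ G₂) Ξ B) := by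
  intro G₂
  induction G₂ with
  | nil => intro Γ₁ _ h; simpa using h
  | cons e es ih =>
    intro Γ₁ hsub h
    cases e with
    | inl a =>
      have := ih (Γ₁ ++ [Sum.inl a]) (fun s hs => hsub s (List.mem_cons_of_mem _ hs))
        (by simpa [econcl] using h)
      simpa using this
    | inr s =>
      have h1 := ih (Γ₁ ++ [Sum.inl s.concl])
        (fun w hw => hsub w (List.mem_cons_of_mem _ hw)) (by simpa [econcl] using h)
      have h2 : TDerIntro H (.mk (Γ₁ ++ [Sum.inr s] ++ es) Ξ B) :=
        TDerIntro.introG (hsub s (List.mem_cons_self))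
          (show TDerIntro H (.mk (Γ₁ ++ [Sum.inl s.concl] ++ es) Ξ B) by simpa using h1)
      simpa using h2

lemma intro_unflatten_C {H : Set (GTree α)} {Γ : List (α ⊕ GTree α)} {B : α} :
    ∀ (C₂ Ξ₁ : List (α ⊕ GTree α)),
      (∀ s : GTree α, Sum.inr s ∈ C₂ → TDerIntro H s) →
      TDerIntro H (.mk Γ (Ξ₁ ++ C₂.map (Sum.inl ∘ econcl)) B) →
      TDerIntro H (.mk Γ (Ξ₁ ++ C₂) B) := by
  intro C₂
  induction C₂ with
  | nil => intro Ξ₁ _ h; simpa using h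
  | cons e es ih =>
    intro Ξ₁ hsub h
    cases e with
    | inl a =>
      have := ih (Ξ₁ ++ [Sum.inl a]) (fun s hs => hsub s (List.mem_cons_of_mem _ hs))
        (by simpa [econcl] using h)
      simpa using this
    | inr s =>
      have h1 := ih (Ξ₁ ++ [Sum.inl s.concl])
        (fun w hw => hsub w (List.mem_cons_of_mem _ hw)) (by simpa [econcl] using h)
      have h2 : TDerIntro H (.mk Γ (Ξ₁ ++ [Sum.inr s] ++ es) B) :=
        TDerIntro.introC (hsub s (List.mem_cons_self))
          (show TDerIntro H (.mk Γ (Ξ₁ ++ [Sum.inl s.concl] ++ es) B) by simpa using h1)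
      simpa using h2

lemma intro_from_claims {H : Set (GTree α)} :
    ∀ (n : ℕ) (t : GTree α), t.size ≤ n →
      (∀ u ∈ t.claims, TDerIntro H u) → TDerIntro H t := by
  intro n
  induction n with
  | zero => intro t hsz; have := one_le_size t; omega
  | succ n ih =>
    rintro ⟨G, C, B⟩ hsz hcl
    have hflat : TDerIntro H (flatten (.mk G C B)) :=
      hcl _ (by simp [claims])
    have hsubG : ∀ s : GTree α, Sum.inr s ∈ G → TDerIntro H s := by
      intro s hs
      refine ih s ?_ ?_
      · have := size_le_of_mem G s hs; simp only [size] at hsz; omega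
      · intro u hu
        exact hcl u (by
          simp only [claims, List.mem_cons, List.mem_append]
          right; left; exact claims_subset_claimsList G s hs u hu)
    have hsubC : ∀ s : GTree α, Sum.inr s ∈ C → TDerIntro H s := by
      intro s hs
      refine ih s ?_ ?_
      · have := size_le_of_mem C s hs; simp only [size] at hsz; omega
      · intro u hu
        exact hcl u (by
          simp only [claims, List.mem_cons, List.mem_append]
          right; right; exact claims_subset_claimsList C s hs u hu)
    have h1 : TDerIntro H (.mk (G.map (Sum.inl ∘ econcl)) C B) := by
      have := intro_unflatten_C C [] hsubC
        (show TDerIntro H (.mk (G.map (Sum.inl ∘ econcl)) ([] ++ C.map (Sum.inl ∘ econcl)) B) by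
          simpa [flatten] using hflat)
      simpa using this
    have := intro_unflatten_G G [] hsubG (by simpa using h1)
    simpa using this

end GTreeAux

theorem grounding_tree_decomposition_recomposition {α : Type*} (t : GTree α)
    (ht : 1 < t.size) :
    (∀ u ∈ t.claims, TDerElim {t} u) ∧
    TDerIntro {u : GTree α | u ∈ t.claims} t := by
  constructor
  · exact GTreeAux.elim_claims t.size t le_rfl (TDerElim.hyp rfl)
  · exact GTreeAux.intro_from_claims t.size t le_rfl (fun u hu => TDerIntro.hyp hu)
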